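/- arXiv:1611.06178 — 4 statements merged into one kernel-verified Lean document; each statement's English description precedes it below -/
import Mathlib

section
/- Let Ψ be a convex differentiable function on (0,∞) with Ψ(0+)=0, negative on (0,ρ), and let v : ℝ × (0,ρ) → (0,ρ) be the flow satisfying ∂/∂λ v_t(λ) = Ψ(v_t(λ))/Ψ(λ). Assume Ψ'(0+) := lim_{u→0+} Ψ(u)/u exists in [-∞, 0) and v_{-t}(λ) → 0 as t → +∞ for each λ ∈ (0,ρ). Then for any λ, λ' ∈ (0,ρ), v_{-t}(λ)/v_{-t}(λ') → exp(Ψ'(0+) ∫_{λ'}^{λ} du/Ψ(u)) as t → +∞; in particular, if Ψ'(0+) = -∞ and λ < λ', then v_{-t}(λ)/v_{-t}(λ') → 0. -/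
/-!
Differentiating `log v` along the flow equation gives
`v(λ) / v(λ') = exp ∫_{λ'}^{λ} g(v(u)) du / Ψ(u)` with `g(u) = Ψ(u) / u`.
Convexity and `Ψ(0+) = 0` make `g` nondecreasing, and `v` is increasing in `λ`, so on the
interval of integration `g ∘ v` lies between `Ψ'(0+)` and its value at the right endpoint, which
tends to `Ψ'(0+)` as `v → 0`. Hence the exponent converges to `Ψ'(0+) ∫_{λ'}^{λ} du / Ψ(u)`, or
diverges to `+∞` when `Ψ'(0+) = -∞` and `λ' < λ`; the case `λ < λ'` follows by inverting.
-/

open MeasureTheory Real Filter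

open Set Topology
open scoped Interval

theorem ConvexOn.monotoneOn_div_of_tendsto_zero {f : ℝ → ℝ} (hf : ConvexOn ℝ (Ioi 0) f)
    (hf0 : Tendsto f (𝓝[>] 0) (𝓝 0)) : MonotoneOn (fun x => f x / x) (Ioi 0) := by
  -- Secant slopes from `e` increase with the right endpoint; let `e → 0+`.
  have hsecant : ∀ x : ℝ, 0 < x →
      Tendsto (fun e => (f x - f e) / (x - e)) (𝓝[>] 0) (𝓝 (f x / x)) := fun x hx => by
    have := (tendsto_const_nhds (x := f x)).sub hf0 |>.div
      ((tendsto_const_nhds (x := x)).sub (tendsto_nhdsWithin_of_tendsto_nhds tendsto_id))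
      (by simpa only [sub_zero] using hx.ne')
    simp only [sub_zero] at this
    exact this
  intro x (hx : 0 < x) y (hy : 0 < y) hxy
  refine le_of_tendsto_of_tendsto (hsecant x hx) (hsecant y hy) ?_
  filter_upwards [Ioo_mem_nhdsGT hx] with e he
  exact hf.secant_mono he.1 hx hy he.2.ne' (he.2.trans_le hxy).ne' hxy

theorem div_eq_exp_integral_deriv_div {f f' : ℝ → ℝ} {a b : ℝ}
    (hf : ∀ x ∈ [[a, b]], HasDerivAt f (f' x) x) (hf' : ContinuousOn f' [[a, b]])
    (hpos : ∀ x ∈ [[a, b]], 0 < f x) :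
    f b / f a = exp (∫ x in a..b, f' x / f x) := by
  have hint : IntervalIntegrable (fun x => f' x / f x) volume a b :=
    (hf'.div (HasDerivAt.continuousOn hf) fun x hx => (hpos x hx).ne').intervalIntegrable
  rw [intervalIntegral.integral_eq_sub_of_hasDerivAt
    (fun x hx => (hf x hx).log (hpos x hx).ne') hint,
    exp_sub, exp_log (hpos b right_mem_uIcc), exp_log (hpos a left_mem_uIcc)]

section WeightedIntegral

variable {ι : Type*} {F : Filter ι} {G : ι → ℝ → ℝ} {w : ℝ → ℝ} {a b : ℝ}

theorem tendsto_intervalIntegral_mul_of_abs_sub_le {ε : ι → ℝ} {c : ℝ}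
    (hG : ∀ i, ContinuousOn (G i) [[a, b]]) (hw : ContinuousOn w [[a, b]])
    (hGc : ∀ i, ∀ x ∈ [[a, b]], |G i x - c| ≤ ε i) (hε : Tendsto ε F (𝓝 0)) :
    Tendsto (fun i => ∫ x in a..b, G i x * w x) F (𝓝 (c * ∫ x in a..b, w x)) := by
  obtain ⟨B, hB⟩ := isCompact_uIcc.exists_bound_of_continuousOn hw
  have hGw : ∀ i, IntervalIntegrable (fun x => G i x * w x) volume a b :=
    fun i => ((hG i).mul hw).intervalIntegrable
  have hbound : ∀ i,
      ‖(∫ x in a..b, G i x * w x) - c * ∫ x in a..b, w x‖ ≤ ε i * B * |b - a| := by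
    intro i
    rw [← intervalIntegral.integral_const_mul, ← intervalIntegral.integral_sub (hGw i)
      (hw.intervalIntegrable.const_mul c)]
    refine intervalIntegral.norm_integral_le_of_norm_le_const fun x hx => ?_
    have hx' : x ∈ [[a, b]] := uIoc_subset_uIcc hx
    rw [← sub_mul, norm_mul, Real.norm_eq_abs]
    exact mul_le_mul (hGc i x hx') (hB x hx') (norm_nonneg _) ((abs_nonneg _).trans (hGc i x hx'))
  rw [tendsto_iff_norm_sub_tendsto_zero]
  refine squeeze_zero (fun _ => norm_nonneg _) hbound ?_
  simpa using (hε.mul_const B).mul_const |b - a|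

theorem tendsto_intervalIntegral_mul_atTop {U : ι → ℝ} (hab : a < b)
    (hG : ∀ i, ContinuousOn (G i) (Icc a b)) (hw : ContinuousOn w (Icc a b))
    (hw_neg : ∀ x ∈ Icc a b, w x < 0) (hGU : ∀ i, ∀ x ∈ Icc a b, G i x ≤ U i)
    (hU : Tendsto U F atBot) :
    Tendsto (fun i => ∫ x in a..b, G i x * w x) F atTop := by
  rw [← uIcc_of_le hab.le] at hG hw
  have hw_int : ∫ x in a..b, w x < 0 := by
    have : 0 < ∫ x in a..b, -w x :=
      intervalIntegral.intervalIntegral_pos_of_pos_on hw.intervalIntegrable.neg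
        (fun x hx => neg_pos.mpr (hw_neg x (Ioo_subset_Icc_self hx))) hab
    rwa [intervalIntegral.integral_neg, neg_pos] at this
  refine tendsto_atTop_mono (fun i => ?_) (hU.atBot_mul_const_of_neg hw_int)
  rw [← intervalIntegral.integral_const_mul]
  refine intervalIntegral.integral_mono_on hab.le (hw.intervalIntegrable.const_mul _)
    ((hG i).mul hw).intervalIntegrable fun x hx => ?_
  exact mul_le_mul_of_nonpos_right (hGU i x hx) (hw_neg x hx).le

end WeightedIntegral

structure IsCumulantFlow {ι : Type*} (Ψ : ℝ → ℝ) (S : Set ℝ) (v : ι → ℝ → ℝ) : Prop where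
  mem : ∀ i, ∀ x ∈ S, v i x ∈ S
  hasDerivAt : ∀ i, ∀ x ∈ S, HasDerivAt (v i) (Ψ (v i x) / Ψ x) x

namespace IsCumulantFlow

variable {ι : Type*} {Ψ : ℝ → ℝ} {S : Set ℝ} {v : ι → ℝ → ℝ} {a b : ℝ}

theorem continuousOn (hv : IsCumulantFlow Ψ S v) (i : ι) : ContinuousOn (v i) S :=
  HasDerivAt.continuousOn (hv.hasDerivAt i)

theorem strictMonoOn (hv : IsCumulantFlow Ψ S v) (hS : S.OrdConnected)
    (hneg : ∀ y ∈ S, Ψ y < 0) (i : ι) : StrictMonoOn (v i) S :=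
  strictMonoOn_of_hasDerivWithinAt_pos hS.convex (hv.continuousOn i)
    (fun x hx => (hv.hasDerivAt i x (interior_subset hx)).hasDerivWithinAt)
    fun x hx => div_pos_of_neg_of_neg (hneg _ (hv.mem i x (interior_subset hx)))
      (hneg x (interior_subset hx))

theorem continuousOn_slope (hv : IsCumulantFlow Ψ S v) (hSpos : S ⊆ Ioi 0)
    (hΨ : ContinuousOn Ψ S) (i : ι) : ContinuousOn (fun x => Ψ (v i x) / v i x) S :=
  (hΨ.comp (hv.continuousOn i) (hv.mem i)).div (hv.continuousOn i)
    fun x hx => (hSpos (hv.mem i x hx)).ne'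

theorem div_eq_exp_integral (hv : IsCumulantFlow Ψ S v) (hS : S.OrdConnected)
    (hSpos : S ⊆ Ioi 0) (hΨ : ContinuousOn Ψ S) (hneg : ∀ y ∈ S, Ψ y < 0) (i : ι)
    (ha : a ∈ S) (hb : b ∈ S) :
    v i b / v i a = exp (∫ x in a..b, Ψ (v i x) / v i x * (1 / Ψ x)) := by
  have hsub := hS.uIcc_subset ha hb
  have hderiv : ContinuousOn (fun x => Ψ (v i x) / Ψ x) [[a, b]] :=
    ((hΨ.comp (hv.continuousOn i) (hv.mem i)).div hΨ fun x hx => (hneg x hx).ne).mono hsub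
  rw [div_eq_exp_integral_deriv_div (fun x hx => hv.hasDerivAt i x (hsub hx)) hderiv
    fun x hx => hSpos (hv.mem i x (hsub hx))]
  congr 1
  refine intervalIntegral.integral_congr fun x _ => ?_
  ring

theorem tendsto_nhdsGT (hv : IsCumulantFlow Ψ S v) (hSpos : S ⊆ Ioi 0) {F : Filter ι} {x : ℝ}
    (hx : x ∈ S) (hv0 : Tendsto (fun i => v i x) F (𝓝 0)) :
    Tendsto (fun i => v i x) F (𝓝[>] 0) :=
  tendsto_nhdsWithin_iff.mpr ⟨hv0, .of_forall fun i => hSpos (hv.mem i x hx)⟩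

theorem tendsto_div (hv : IsCumulantFlow Ψ S v) (hS : S.OrdConnected)
    (hSpos : S ⊆ Ioi 0) (hΨ : ContinuousOn Ψ S) (hneg : ∀ y ∈ S, Ψ y < 0)
    (hslope : MonotoneOn (fun u => Ψ u / u) (Ioi 0)) {c : ℝ}
    (hc : Tendsto (fun u => Ψ u / u) (𝓝[>] 0) (𝓝 c)) {F : Filter ι}
    (hv0 : ∀ x ∈ S, Tendsto (fun i => v i x) F (𝓝 0)) (ha : a ∈ S) (hb : b ∈ S) :
    Tendsto (fun i => v i b / v i a) F (𝓝 (exp (c * ∫ x in a..b, 1 / Ψ x))) := by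
  have hsub := hS.uIcc_subset ha hb
  have hM : a ⊔ b ∈ S := hsub ⟨inf_le_sup, le_rfl⟩
  have hc_le : ∀ u, 0 < u → c ≤ Ψ u / u := fun u hu => le_of_tendsto hc <| by
    filter_upwards [Ioo_mem_nhdsGT hu] with e he using hslope he.1 hu he.2.le
  have hbound : ∀ i, ∀ x ∈ [[a, b]],
      |Ψ (v i x) / v i x - c| ≤ Ψ (v i (a ⊔ b)) / v i (a ⊔ b) - c := by
    intro i x hx
    have hpos := hSpos (hv.mem i x (hsub hx))
    have hle := hslope hpos (hSpos (hv.mem i _ hM))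
      ((hv.strictMonoOn hS hneg i).monotoneOn (hsub hx) hM hx.2)
    rw [abs_of_nonneg (sub_nonneg.mpr (hc_le _ hpos))]
    linarith
  have hlim := tendsto_intervalIntegral_mul_of_abs_sub_le (w := fun x => 1 / Ψ x)
    (fun i => (hv.continuousOn_slope hSpos hΨ i).mono hsub)
    ((continuousOn_const.div hΨ fun x hx => (hneg x hx).ne).mono hsub) hbound
    (by simpa using (hc.comp (hv.tendsto_nhdsGT hSpos hM (hv0 _ hM))).sub_const c)
  exact ((continuous_exp.tendsto _).comp hlim).congr fun i =>
    (hv.div_eq_exp_integral hS hSpos hΨ hneg i ha hb).symm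

theorem tendsto_div_atTop (hv : IsCumulantFlow Ψ S v) (hS : S.OrdConnected)
    (hSpos : S ⊆ Ioi 0) (hΨ : ContinuousOn Ψ S) (hneg : ∀ y ∈ S, Ψ y < 0)
    (hslope : MonotoneOn (fun u => Ψ u / u) (Ioi 0))
    (hbot : Tendsto (fun u => Ψ u / u) (𝓝[>] 0) atBot) {F : Filter ι}
    (hv0 : ∀ x ∈ S, Tendsto (fun i => v i x) F (𝓝 0)) (ha : a ∈ S) (hb : b ∈ S) (hab : a < b) :
    Tendsto (fun i => v i b / v i a) F atTop := by
  have hsub : Icc a b ⊆ S := hS.out ha hb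
  have hlim := tendsto_intervalIntegral_mul_atTop (w := fun x => 1 / Ψ x) hab
    (fun i => (hv.continuousOn_slope hSpos hΨ i).mono hsub)
    ((continuousOn_const.div hΨ fun x hx => (hneg x hx).ne).mono hsub)
    (fun x hx => one_div_neg.mpr (hneg x (hsub hx)))
    (fun i x hx => hslope (hSpos (hv.mem i x (hsub hx))) (hSpos (hv.mem i b hb))
      ((hv.strictMonoOn hS hneg i).monotoneOn (hsub hx) hb hx.2))
    (hbot.comp (hv.tendsto_nhdsGT hSpos hb (hv0 b hb)))
  exact (tendsto_exp_atTop.comp hlim).congr fun i =>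
    (hv.div_eq_exp_integral hS hSpos hΨ hneg i ha hb).symm

end IsCumulantFlow

theorem inverse_flow_ratio_supercritical_general (Ψ : ℝ → ℝ) (ρ : EReal)
    (S : Set ℝ) (hS : S = {y : ℝ | 0 < y ∧ (y : EReal) < ρ})
    (hconv : ConvexOn ℝ (Set.Ioi 0) Ψ)
    (hΨ0 : Tendsto Ψ (nhdsWithin 0 (Set.Ioi 0)) (nhds 0))
    (hneg : ∀ y ∈ S, Ψ y < 0)
    (v : ℝ → ℝ → ℝ)
    (hvmem : ∀ t : ℝ, ∀ l ∈ S, v t l ∈ S)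
    (hvderiv : ∀ t : ℝ, ∀ l ∈ S, HasDerivAt (fun x => v t x) (Ψ (v t l) / Ψ l) l)
    (hv0 : ∀ l ∈ S, Tendsto (fun t : ℝ => v (-t) l) atTop (nhds 0))
    (ψ0 : EReal)
    (hψ0 : Tendsto (fun u : ℝ => ((Ψ u / u : ℝ) : EReal))
      (nhdsWithin 0 (Set.Ioi 0)) (nhds ψ0))
    (hψ0neg : ψ0 < 0) :
    (∀ l ∈ S, ∀ l' ∈ S, ψ0 ≠ ⊥ →
      Tendsto (fun t : ℝ => v (-t) l / v (-t) l') atTop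
        (nhds (Real.exp (ψ0.toReal * ∫ u in l'..l, 1 / Ψ u)))) ∧
    (ψ0 = ⊥ → ∀ l ∈ S, ∀ l' ∈ S, l < l' →
      Tendsto (fun t : ℝ => v (-t) l / v (-t) l') atTop (nhds 0)) ∧
    (ψ0 = ⊥ → ∀ l ∈ S, ∀ l' ∈ S, l' < l →
      Tendsto (fun t : ℝ => v (-t) l / v (-t) l') atTop atTop) := by
  have hSconn : S.OrdConnected := hS ▸
    ordConnected_Ioi.inter (ordConnected_Iio.preimage_mono EReal.coe_strictMono.monotone)
  have hSpos : S ⊆ Ioi 0 := hS ▸ fun _ hy => hy.1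
  have hΨ := (hconv.continuousOn isOpen_Ioi).mono hSpos
  have hslope := hconv.monotoneOn_div_of_tendsto_zero hΨ0
  have hflow : IsCumulantFlow Ψ S fun t => v (-t) := ⟨fun t => hvmem (-t), fun t => hvderiv (-t)⟩
  have hbot : ψ0 = ⊥ → ∀ l ∈ S, ∀ l' ∈ S, l' < l →
      Tendsto (fun t : ℝ => v (-t) l / v (-t) l') atTop atTop := by
    rintro rfl l hl l' hl' hl'l
    exact hflow.tendsto_div_atTop hSconn hSpos hΨ hneg hslope
      (EReal.tendsto_coe_nhds_bot_iff.mp hψ0) hv0 hl' hl hl'l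
  refine ⟨fun l hl l' hl' hψ0bot => ?_, fun hψ0bot l hl l' hl' hll' => ?_, hbot⟩
  · obtain ⟨c, rfl⟩ : ∃ c : ℝ, ψ0 = c :=
      ⟨ψ0.toReal, (EReal.coe_toReal hψ0neg.ne_top hψ0bot).symm⟩
    rw [EReal.toReal_coe]
    exact hflow.tendsto_div hSconn hSpos hΨ hneg hslope (EReal.tendsto_coe.mp hψ0) hv0 hl' hl
  · simpa only [Function.comp_def, inv_div] using
      tendsto_inv_atTop_zero.comp (hbot hψ0bot l' hl' l hl hll')

/-- Asymptotic ratio of the inverse cumulant flow in the supercritical case: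
`v_{-t}(λ)/v_{-t}(λ') → exp(Ψ'(0+)·∫_{λ'}^{λ} du/Ψ(u))`, with the convention
that the limit is `0` (resp. `+∞`) when `Ψ'(0+) = -∞` and `λ < λ'` (resp. `λ' < λ`). -/
theorem inverse_flow_ratio_supercritical (Ψ : ℝ → ℝ) (ρ : EReal) (hρ : 0 < ρ)
    (S : Set ℝ) (hS : S = {y : ℝ | 0 < y ∧ (y : EReal) < ρ})
    (hconv : ConvexOn ℝ (Set.Ioi 0) Ψ)
    (hdiff : DifferentiableOn ℝ Ψ (Set.Ioi 0))
    (hΨ0 : Tendsto Ψ (nhdsWithin 0 (Set.Ioi 0)) (nhds 0))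
    (hneg : ∀ y ∈ S, Ψ y < 0)
    (v : ℝ → ℝ → ℝ)
    (hvmem : ∀ t : ℝ, ∀ l ∈ S, v t l ∈ S)
    (hvderiv : ∀ t : ℝ, ∀ l ∈ S, HasDerivAt (fun x => v t x) (Ψ (v t l) / Ψ l) l)
    (hv0 : ∀ l ∈ S, Tendsto (fun t : ℝ => v (-t) l) atTop (nhds 0))
    (ψ0 : EReal)
    (hψ0 : Tendsto (fun u : ℝ => ((Ψ u / u : ℝ) : EReal))
      (nhdsWithin 0 (Set.Ioi 0)) (nhds ψ0))
    (hψ0neg : ψ0 < 0) :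
    (∀ l ∈ S, ∀ l' ∈ S, ψ0 ≠ ⊥ →
      Tendsto (fun t : ℝ => v (-t) l / v (-t) l') atTop
        (nhds (Real.exp (ψ0.toReal * ∫ u in l'..l, 1 / Ψ u)))) ∧
    (ψ0 = ⊥ → ∀ l ∈ S, ∀ l' ∈ S, l < l' →
      Tendsto (fun t : ℝ => v (-t) l / v (-t) l') atTop (nhds 0)) ∧
    (ψ0 = ⊥ → ∀ l ∈ S, ∀ l' ∈ S, l' < l →
      Tendsto (fun t : ℝ => v (-t) l / v (-t) l') atTop atTop) :=
  inverse_flow_ratio_supercritical_general Ψ ρ S hS hconv hΨ0 hneg v hvmem hvderiv hv0 ψ0 hψ0 hψ0neg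
end

section
/- Let Ψ be a convex function on (0,∞), positive on (0,∞) with Ψ'(0+) ≥ 0, and let d := lim_{u→∞} Ψ(u)/u ∈ (0,+∞]. Let v_{-t}(λ) be defined by ∫_{λ}^{v_{-t}(λ)} du/Ψ(u) = t, and assume v_{-t}(λ) → +∞ as t → ∞ for each λ > 0. Then for any λ, λ' > 0, v_{-t}(λ)/v_{-t}(λ') → exp(d · ∫_{λ'}^{λ} du/Ψ(u)) as t → +∞, where the right side is interpreted as 0 if d = +∞ and λ < λ', and +∞ if d = +∞ and λ > λ'. -/
open MeasureTheory Real Filter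

namespace InverseFlowAux

variable {Ψ : ℝ → ℝ}

lemma uIcc_subset_Ioi {a b : ℝ} (ha : 0 < a) (hb : 0 < b) :
    Set.uIcc a b ⊆ Set.Ioi 0 := fun u hu => lt_of_lt_of_le (lt_min ha hb) hu.1

lemma cont (hconv : ConvexOn ℝ (Set.Ioi 0) Ψ) : ContinuousOn Ψ (Set.Ioi 0) :=
  hconv.continuousOn isOpen_Ioi

lemma contOn_mul (hconv : ConvexOn ℝ (Set.Ioi 0) Ψ) (hpos : ∀ u : ℝ, 0 < u → 0 < Ψ u)
    {f : ℝ → ℝ} (hf : ContinuousOn f (Set.Ioi 0)) :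
    ContinuousOn (fun u => f u * (1 / Ψ u)) (Set.Ioi 0) :=
  hf.mul (continuousOn_const.div (cont hconv) fun u hu => (hpos u hu).ne')

lemma intg_mul (hconv : ConvexOn ℝ (Set.Ioi 0) Ψ) (hpos : ∀ u : ℝ, 0 < u → 0 < Ψ u)
    {f : ℝ → ℝ} (hf : ContinuousOn f (Set.Ioi 0)) {a b : ℝ} (ha : 0 < a) (hb : 0 < b) :
    IntervalIntegrable (fun u => f u * (1 / Ψ u)) volume a b :=
  ((contOn_mul hconv hpos hf).mono (uIcc_subset_Ioi ha hb)).intervalIntegrable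

lemma intg_one (hconv : ConvexOn ℝ (Set.Ioi 0) Ψ) (hpos : ∀ u : ℝ, 0 < u → 0 < Ψ u)
    {a b : ℝ} (ha : 0 < a) (hb : 0 < b) :
    IntervalIntegrable (fun u => 1 / Ψ u) volume a b := by
  have h := intg_mul hconv hpos (f := fun _ => (1:ℝ)) continuousOn_const ha hb
  simpa using h

lemma integral_nonneg' (hpos : ∀ u : ℝ, 0 < u → 0 < Ψ u) {a b : ℝ} (ha : 0 < a) (hab : a ≤ b) :
    0 ≤ ∫ u in a..b, 1 / Ψ u :=
  intervalIntegral.integral_nonneg hab fun u hu =>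
    le_of_lt (div_pos one_pos (hpos u (lt_of_lt_of_le ha hu.1)))

lemma le_of_integral_pos (hpos : ∀ u : ℝ, 0 < u → 0 < Ψ u) {a b : ℝ} (ha : 0 < a) (hb : 0 < b)
    (h : 0 < ∫ u in a..b, 1 / Ψ u) : a ≤ b := by
  by_contra hc
  push_neg at hc
  have h2 : 0 ≤ ∫ u in b..a, 1 / Ψ u := integral_nonneg' hpos hb hc.le
  rw [intervalIntegral.integral_symm] at h
  linarith

lemma le_of_integral_neg (hpos : ∀ u : ℝ, 0 < u → 0 < Ψ u) {a b : ℝ} (ha : 0 < a) (hb : 0 < b)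
    (h : (∫ u in a..b, 1 / Ψ u) < 0) : b ≤ a := by
  by_contra hc
  push_neg at hc
  have h2 : 0 ≤ ∫ u in a..b, 1 / Ψ u := integral_nonneg' hpos ha hc.le
  linarith

lemma integral_pos (hconv : ConvexOn ℝ (Set.Ioi 0) Ψ) (hpos : ∀ u : ℝ, 0 < u → 0 < Ψ u)
    {a b : ℝ} (ha : 0 < a) (hab : a < b) : 0 < ∫ u in a..b, 1 / Ψ u := by
  apply intervalIntegral.intervalIntegral_pos_of_pos_on
    (intg_one hconv hpos ha (ha.trans hab))
  · intro u hu
    exact div_pos one_pos (hpos u (ha.trans hu.1))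
  · exact hab

section KeyIdentities

variable (hconv : ConvexOn ℝ (Set.Ioi 0) Ψ) (hpos : ∀ u : ℝ, 0 < u → 0 < Ψ u)
  (vneg : ℝ → ℝ → ℝ)
  (hvpos : ∀ t : ℝ, 0 ≤ t → ∀ l : ℝ, 0 < l → 0 < vneg t l)
  (hv : ∀ t : ℝ, 0 ≤ t → ∀ l : ℝ, 0 < l → (∫ u in l..(vneg t l), 1 / Ψ u) = t)

include hconv hpos hvpos hv in
lemma key_c {t l l' : ℝ} (ht : 0 ≤ t) (hl : 0 < l) (hl' : 0 < l') :
    (∫ u in (vneg t l')..(vneg t l), 1 / Ψ u) = ∫ u in l'..l, 1 / Ψ u := by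
  have hb := hvpos t ht l hl
  have ha := hvpos t ht l' hl'
  have h1 : (∫ u in l'..l, 1 / Ψ u) + (∫ u in l..(vneg t l), 1 / Ψ u)
      = ∫ u in l'..(vneg t l), 1 / Ψ u :=
    intervalIntegral.integral_add_adjacent_intervals (intg_one hconv hpos hl' hl)
      (intg_one hconv hpos hl hb)
  have h2 : (∫ u in l'..(vneg t l'), 1 / Ψ u) + (∫ u in (vneg t l')..(vneg t l), 1 / Ψ u)
      = ∫ u in l'..(vneg t l), 1 / Ψ u :=
    intervalIntegral.integral_add_adjacent_intervals (intg_one hconv hpos hl' ha)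
      (intg_one hconv hpos ha hb)
  rw [hv t ht l hl] at h1
  rw [hv t ht l' hl'] at h2
  linarith

include hconv hpos hvpos in
lemma key_log {t l l' : ℝ} (ht : 0 ≤ t) (hl : 0 < l) (hl' : 0 < l') :
    Real.log (vneg t l / vneg t l')
      = ∫ u in (vneg t l')..(vneg t l), (Ψ u / u) * (1 / Ψ u) := by
  have hb := hvpos t ht l hl
  have ha := hvpos t ht l' hl'
  have hsub := uIcc_subset_Ioi ha hb
  have hcongr : (∫ u in (vneg t l')..(vneg t l), (Ψ u / u) * (1 / Ψ u))
      = ∫ u in (vneg t l')..(vneg t l), 1 / u := by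
    apply intervalIntegral.integral_congr
    intro u hu
    have hu0 : 0 < u := hsub hu
    have hΨ : Ψ u ≠ 0 := (hpos u hu0).ne'
    field_simp
  rw [hcongr, integral_one_div]
  intro h0
  exact lt_irrefl 0 (Set.mem_Ioi.mp (hsub h0))

end KeyIdentities

variable (hconv : ConvexOn ℝ (Set.Ioi 0) Ψ) (hpos : ∀ u : ℝ, 0 < u → 0 < Ψ u)

include hconv hpos in
lemma bound_finite {D ε' M p q : ℝ}
    (hM : ∀ u : ℝ, M ≤ u → |Ψ u / u - D| ≤ ε')
    (hp : 0 < p) (hpq : p ≤ q) (hMp : M ≤ p) :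
    |∫ u in p..q, (Ψ u / u - D) * (1 / Ψ u)| ≤ ε' * ∫ u in p..q, 1 / Ψ u := by
  have hq : 0 < q := lt_of_lt_of_le hp hpq
  have hcf : ContinuousOn (fun u : ℝ => Ψ u / u - D) (Set.Ioi 0) :=
    ((cont hconv).div continuousOn_id fun u hu => ne_of_gt hu).sub continuousOn_const
  have hint1 : IntervalIntegrable (fun u => (Ψ u / u - D) * (1 / Ψ u)) volume p q :=
    intg_mul hconv hpos hcf hp hq
  calc |∫ u in p..q, (Ψ u / u - D) * (1 / Ψ u)|
      ≤ ∫ u in p..q, |(Ψ u / u - D) * (1 / Ψ u)| :=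
        intervalIntegral.abs_integral_le_integral_abs hpq
    _ ≤ ∫ u in p..q, ε' * (1 / Ψ u) := by
        apply intervalIntegral.integral_mono_on hpq hint1.abs
        · exact intg_mul hconv hpos (f := fun _ => ε') continuousOn_const hp hq
        · intro u hu
          have hu0 : 0 < u := lt_of_lt_of_le hp hu.1
          have h1Ψ : 0 ≤ 1 / Ψ u := le_of_lt (div_pos one_pos (hpos u hu0))
          rw [abs_mul, abs_of_nonneg h1Ψ]
          exact mul_le_mul_of_nonneg_right (hM u (hMp.trans hu.1)) h1Ψ
    _ = ε' * ∫ u in p..q, 1 / Ψ u := intervalIntegral.integral_const_mul _ _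

include hconv hpos in
lemma bound_lower {K M p q : ℝ}
    (hM : ∀ u : ℝ, M ≤ u → K ≤ Ψ u / u)
    (hp : 0 < p) (hpq : p ≤ q) (hMp : M ≤ p) :
    K * (∫ u in p..q, 1 / Ψ u) ≤ ∫ u in p..q, (Ψ u / u) * (1 / Ψ u) := by
  have hq : 0 < q := lt_of_lt_of_le hp hpq
  rw [← intervalIntegral.integral_const_mul]
  apply intervalIntegral.integral_mono_on hpq
  · exact intg_mul hconv hpos (f := fun _ => K) continuousOn_const hp hq
  · exact intg_mul hconv hpos ((cont hconv).div continuousOn_id fun u hu => ne_of_gt hu) hp hq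
  · intro u hu
    have hu0 : 0 < u := lt_of_lt_of_le hp hu.1
    exact mul_le_mul_of_nonneg_right (hM u (hMp.trans hu.1))
      (le_of_lt (div_pos one_pos (hpos u hu0)))

end InverseFlowAux

/-- Asymptotic ratio of the inverse cumulant flow in the (sub)critical case:
`v_{-t}(λ)/v_{-t}(λ') → exp(d·∫_{λ'}^{λ} du/Ψ(u))` where `d = lim_{u→∞} Ψ(u)/u ∈ (0,∞]`,
with the convention that the limit is `0` (resp. `+∞`) when `d = +∞` and `λ < λ'`
(resp. `λ' < λ`). Here `vneg t l` stands for `v_{-t}(λ)`, defined by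
`∫_{λ}^{v_{-t}(λ)} du/Ψ(u) = t`. -/
theorem inverse_flow_ratio_subcritical (Ψ : ℝ → ℝ)
    (hconv : ConvexOn ℝ (Set.Ioi 0) Ψ)
    (hpos : ∀ u : ℝ, 0 < u → 0 < Ψ u)
    (ψ0 : ℝ) (hψ0 : 0 ≤ ψ0)
    (hmean0 : Tendsto (fun u => Ψ u / u) (nhdsWithin 0 (Set.Ioi 0)) (nhds ψ0))
    (d : EReal) (hd0 : 0 < d)
    (hd : Tendsto (fun u : ℝ => ((Ψ u / u : ℝ) : EReal)) atTop (nhds d))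
    (vneg : ℝ → ℝ → ℝ)
    (hvpos : ∀ t : ℝ, 0 ≤ t → ∀ l : ℝ, 0 < l → 0 < vneg t l)
    (hv : ∀ t : ℝ, 0 ≤ t → ∀ l : ℝ, 0 < l →
      (∫ u in l..(vneg t l), 1 / Ψ u) = t)
    (hvdiv : ∀ l : ℝ, 0 < l → Tendsto (fun t : ℝ => vneg t l) atTop atTop) :
    (∀ l : ℝ, 0 < l → ∀ l' : ℝ, 0 < l' → d ≠ ⊤ →
      Tendsto (fun t : ℝ => vneg t l / vneg t l') atTop
        (nhds (Real.exp (d.toReal * ∫ u in l'..l, 1 / Ψ u)))) ∧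
    (d = ⊤ → ∀ l : ℝ, 0 < l → ∀ l' : ℝ, 0 < l' → l < l' →
      Tendsto (fun t : ℝ => vneg t l / vneg t l') atTop (nhds 0)) ∧
    (d = ⊤ → ∀ l : ℝ, 0 < l → ∀ l' : ℝ, 0 < l' → l' < l →
      Tendsto (fun t : ℝ => vneg t l / vneg t l') atTop atTop) := by
  open InverseFlowAux in
  have hratio_eq : ∀ l : ℝ, 0 < l → ∀ l' : ℝ, 0 < l' → ∀ᶠ t : ℝ in atTop,
      vneg t l / vneg t l' = Real.exp (Real.log (vneg t l / vneg t l')) := by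
    intro l hl l' hl'
    filter_upwards [eventually_ge_atTop (0:ℝ)] with t ht
    exact (Real.exp_log (div_pos (hvpos t ht l hl) (hvpos t ht l' hl'))).symm
  refine ⟨?_, ?_, ?_⟩
  · -- finite case
    intro l hl l' hl' hdtop
    have hdbot : d ≠ ⊥ := fun h => by simp [h] at hd0
    set D := d.toReal with hD
    have hdeq : d = (D : EReal) := (EReal.coe_toReal hdtop hdbot).symm
    rw [hdeq] at hd
    have hg : Tendsto (fun u : ℝ => Ψ u / u) atTop (nhds D) := EReal.tendsto_coe.mp hd
    set c := ∫ u in l'..l, 1 / Ψ u with hc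
    have hlog : Tendsto (fun t : ℝ => Real.log (vneg t l / vneg t l')) atTop
        (nhds (D * c)) := by
      rw [Metric.tendsto_nhds]
      intro ε hε
      set ε' := ε / (|c| + 1) with hε'def
      have habs : (0:ℝ) < |c| + 1 := by positivity
      have hε' : 0 < ε' := div_pos hε habs
      obtain ⟨M, hM⟩ : ∃ M : ℝ, ∀ u : ℝ, M ≤ u → |Ψ u / u - D| ≤ ε' := by
        obtain ⟨M, hM⟩ := (Metric.tendsto_atTop.mp hg ε' hε')
        exact ⟨M, fun u hu => le_of_lt (by simpa [Real.dist_eq] using hM u hu)⟩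
      filter_upwards [eventually_ge_atTop (0:ℝ), (hvdiv l hl).eventually_ge_atTop M,
        (hvdiv l' hl').eventually_ge_atTop M] with t ht h1 h2
      have hb := hvpos t ht l hl
      have ha := hvpos t ht l' hl'
      have hkc : (∫ u in (vneg t l')..(vneg t l), 1 / Ψ u) = c :=
        key_c hconv hpos vneg hvpos hv ht hl hl'
      have hkl := key_log hconv hpos vneg hvpos ht hl hl'
      have hcf : ContinuousOn (fun u : ℝ => Ψ u / u) (Set.Ioi 0) :=
        (cont hconv).div continuousOn_id fun u hu => ne_of_gt hu
      have hsplit : (∫ u in (vneg t l')..(vneg t l), (Ψ u / u - D) * (1 / Ψ u))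
          = (∫ u in (vneg t l')..(vneg t l), (Ψ u / u) * (1 / Ψ u)) - D * c := by
        have heq : ∀ u : ℝ, (Ψ u / u - D) * (1 / Ψ u)
            = (Ψ u / u) * (1 / Ψ u) - D * (1 / Ψ u) := fun u => by ring
        simp_rw [heq]
        rw [intervalIntegral.integral_sub (intg_mul hconv hpos hcf ha hb)
          (intg_mul hconv hpos (f := fun _ => D) continuousOn_const ha hb),
          intervalIntegral.integral_const_mul, hkc]
      have hbd : |∫ u in (vneg t l')..(vneg t l), (Ψ u / u - D) * (1 / Ψ u)| < ε := by
        have hfin : ε' * |c| < ε := by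
          calc ε' * |c| < ε' * (|c| + 1) := by
                exact mul_lt_mul_of_pos_left (lt_add_one _) hε'
            _ = ε := div_mul_cancel₀ ε habs.ne'
        rcases le_total (vneg t l') (vneg t l) with hab | hab
        · have := bound_finite hconv hpos hM ha hab h2
          have hcnn : 0 ≤ ∫ u in (vneg t l')..(vneg t l), 1 / Ψ u :=
            integral_nonneg' hpos ha hab
          rw [hkc] at this hcnn
          calc |∫ u in (vneg t l')..(vneg t l), (Ψ u / u - D) * (1 / Ψ u)|
              ≤ ε' * c := this
            _ ≤ ε' * |c| := mul_le_mul_of_nonneg_left (le_abs_self c) hε'.le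
            _ < ε := hfin
        · have := bound_finite hconv hpos hM hb hab h1
          have hsym : (∫ u in (vneg t l)..(vneg t l'), 1 / Ψ u) = -c := by
            rw [← hkc, intervalIntegral.integral_symm]
          rw [hsym] at this
          have habs2 : |∫ u in (vneg t l')..(vneg t l), (Ψ u / u - D) * (1 / Ψ u)|
              = |∫ u in (vneg t l)..(vneg t l'), (Ψ u / u - D) * (1 / Ψ u)| := by
            rw [intervalIntegral.integral_symm, abs_neg]
          rw [habs2]
          calc |∫ u in (vneg t l)..(vneg t l'), (Ψ u / u - D) * (1 / Ψ u)|
              ≤ ε' * (-c) := this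
            _ ≤ ε' * |c| := mul_le_mul_of_nonneg_left (neg_le_abs c) hε'.le
            _ < ε := hfin
      rw [Real.dist_eq, hkl, ← hsplit]
      exact hbd
    have hfinal := (Real.continuous_exp.tendsto _).comp hlog
    refine Tendsto.congr' ?_ hfinal
    filter_upwards [hratio_eq l hl l' hl'] with t ht
    exact ht.symm
  · -- d = ⊤, l < l'
    intro hdtop l hl l' hl' hll'
    have hgtop : ∀ K : ℝ, ∃ M : ℝ, ∀ u : ℝ, M ≤ u → K ≤ Ψ u / u := by
      intro K
      rw [hdtop] at hd
      obtain ⟨M, hM⟩ := eventually_atTop.mp (EReal.tendsto_nhds_top_iff_real.mp hd K)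
      exact ⟨M, fun u hu => le_of_lt (by exact_mod_cast hM u hu)⟩
    have hcneg : (∫ u in l'..l, 1 / Ψ u) < 0 := by
      have := integral_pos hconv hpos hl hll'
      rw [intervalIntegral.integral_symm] at this
      linarith
    set c := ∫ u in l'..l, 1 / Ψ u with hc
    have hlog : Tendsto (fun t : ℝ => Real.log (vneg t l / vneg t l')) atTop atBot := by
      rw [tendsto_atBot]
      intro K
      obtain ⟨M, hM⟩ := hgtop (K / c)
      filter_upwards [eventually_ge_atTop (0:ℝ), (hvdiv l hl).eventually_ge_atTop M] with t ht h1
      have hb := hvpos t ht l hl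
      have ha := hvpos t ht l' hl'
      have hkc : (∫ u in (vneg t l')..(vneg t l), 1 / Ψ u) = c :=
        key_c hconv hpos vneg hvpos hv ht hl hl'
      have hkl := key_log hconv hpos vneg hvpos ht hl hl'
      have hba : vneg t l ≤ vneg t l' := le_of_integral_neg hpos ha hb (hkc ▸ hcneg)
      have hlow := bound_lower hconv hpos hM hb hba h1
      have hsym : (∫ u in (vneg t l)..(vneg t l'), 1 / Ψ u) = -c := by
        rw [← hkc, intervalIntegral.integral_symm]
      rw [hsym] at hlow
      rw [hkl, intervalIntegral.integral_symm]
      have : K / c * -c = -K := by rw [mul_neg, div_mul_cancel₀ K hcneg.ne]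
      linarith
    have hfinal := Real.tendsto_exp_atBot.comp hlog
    refine Tendsto.congr' ?_ hfinal
    filter_upwards [hratio_eq l hl l' hl'] with t ht
    exact ht.symm
  · -- d = ⊤, l' < l
    intro hdtop l hl l' hl' hll'
    have hgtop : ∀ K : ℝ, ∃ M : ℝ, ∀ u : ℝ, M ≤ u → K ≤ Ψ u / u := by
      intro K
      rw [hdtop] at hd
      obtain ⟨M, hM⟩ := eventually_atTop.mp (EReal.tendsto_nhds_top_iff_real.mp hd K)
      exact ⟨M, fun u hu => le_of_lt (by exact_mod_cast hM u hu)⟩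
    have hcpos : (0:ℝ) < ∫ u in l'..l, 1 / Ψ u := integral_pos hconv hpos hl' hll'
    set c := ∫ u in l'..l, 1 / Ψ u with hc
    have hlog : Tendsto (fun t : ℝ => Real.log (vneg t l / vneg t l')) atTop atTop := by
      rw [tendsto_atTop]
      intro K
      obtain ⟨M, hM⟩ := hgtop (K / c)
      filter_upwards [eventually_ge_atTop (0:ℝ), (hvdiv l' hl').eventually_ge_atTop M] with t ht h1
      have hb := hvpos t ht l hl
      have ha := hvpos t ht l' hl'
      have hkc : (∫ u in (vneg t l')..(vneg t l), 1 / Ψ u) = c :=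
        key_c hconv hpos vneg hvpos hv ht hl hl'
      have hkl := key_log hconv hpos vneg hvpos ht hl hl'
      have hab : vneg t l' ≤ vneg t l := le_of_integral_pos hpos ha hb (hkc ▸ hcpos)
      have hlow := bound_lower hconv hpos hM ha hab h1
      rw [hkc] at hlow
      rw [hkl]
      have : K / c * c = K := div_mul_cancel₀ K hcpos.ne'
      linarith
    have hfinal := Real.tendsto_exp_atTop.comp hlog
    refine Tendsto.congr' ?_ hfinal
    filter_upwards [hratio_eq l hl l' hl'] with t ht
    exact ht.symm
end

section
/- Let Ψ be a branching mechanism with Ψ'(0+) = -∞ and ∫_{0+} du/Ψ(u) = -∞, and suppose there exist λ > 0 and α > 0 such that ∫_0^λ |1/Ψ(u) - 1/(α·u·log u)| du < ∞. Then with G(y) = exp(-∫_y^λ du/Ψ(u)), one has G(1/y) ~ k_λ·(log y)^{1/α} as y → +∞, for some constant k_λ ∈ (0,∞); explicitly, G(1/y)/(log y)^{1/α} → exp(-∫_0^λ (1/Ψ(u) - 1/(α u log u)) du - (1/α)·log log(1/λ)). -/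
open MeasureTheory Real Filter Set Topology

/-! Write `1/Ψ = h + 1/(α u log u)` with `h` integrable on `(0, λ]`. The second term has the
antiderivative `α⁻¹ log (log u)` (recall that `Real.log` is even), so over `[x, λ]` it contributes
exactly `α⁻¹ (log log (1/λ) - log log (1/x))`; after exponentiating, the last term cancels against
`(log (1/x))^{1/α}`, and what remains, `exp (-∫_x^λ h - α⁻¹ log log (1/λ))`, converges as `x → 0+`
by integrability of `h`. -/

theorem continuousOn_inv_div_log : ContinuousOn (fun t : ℝ => t⁻¹ / log t) {-1, 0, 1}ᶜ := by
  refine ContinuousOn.div ?_ ?_ fun t ht => ?_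
  · exact continuousOn_inv₀.mono fun t ht => by grind
  · exact continuousOn_log.mono fun t ht => by grind
  · exact log_ne_zero.2 (by grind)

theorem integral_inv_div_log' {a b : ℝ} (h : uIcc a b ⊆ {-1, 0, 1}ᶜ) :
    ∫ t in a..b, t⁻¹ / log t = log (log b) - log (log a) :=
  intervalIntegral.integral_eq_sub_of_hasDerivAt (f := fun t => log (log t))
    (fun t ht => hasDerivAt_log_log (by grind) (by grind) (by grind))
    (continuousOn_inv_div_log.mono h).intervalIntegrable

theorem tendsto_intervalIntegral_nhdsGT_of_integrableOn_Ioc {f : ℝ → ℝ} {a b : ℝ} (hab : a < b)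
    (hf : IntegrableOn f (Ioc a b)) :
    Tendsto (fun x => ∫ u in x..b, f u) (𝓝[>] a) (𝓝 (∫ u in Ioc a b, f u)) := by
  have hf' : IntegrableOn f (uIcc a b) := by
    rwa [uIcc_of_le hab.le, integrableOn_Icc_iff_integrableOn_Ioc]
  have := (intervalIntegral.continuousOn_primitive_interval_left hf' a left_mem_uIcc).mono
    (uIcc_of_le hab.le ▸ Ioc_subset_Icc_self)
  rwa [ContinuousWithinAt, nhdsWithin_Ioc_eq_nhdsGT hab,
    intervalIntegral.integral_of_le hab.le] at this

theorem integral_eq_integral_sub_one_div_mul_log_add {F : ℝ → ℝ} (α : ℝ) {a b : ℝ} (ha : 0 < a)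
    (hab : a ≤ b) (hb : b < 1) (hF : IntegrableOn (fun u => F u - 1 / (α * u * log u)) (Ioc a b)) :
    ∫ u in a..b, F u =
      (∫ u in a..b, (F u - 1 / (α * u * log u))) + α⁻¹ * (log (log b) - log (log a)) := by
  have hsub : uIcc a b ⊆ {-1, 0, 1}ᶜ := fun t ht => by grind [uIcc]
  have hg : ∀ u, 1 / (α * u * log u) = α⁻¹ * (u⁻¹ / log u) := fun u => by
    rw [one_div, mul_inv, mul_inv, div_eq_mul_inv, mul_assoc]
  simp_rw [hg] at hF ⊢
  rw [← integral_inv_div_log' hsub, ← intervalIntegral.integral_const_mul,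
    ← intervalIntegral.integral_add
      ((intervalIntegrable_iff_integrableOn_Ioc_of_le hab).2 hF)
      ((continuousOn_inv_div_log.mono hsub).intervalIntegrable.const_mul _)]
  simp

theorem exp_neg_integral_div_rpow_log_inv {F : ℝ → ℝ} (α : ℝ) {x lam : ℝ} (hx : 0 < x)
    (hxlam : x ≤ lam) (hlam : lam < 1)
    (hF : IntegrableOn (fun u => F u - 1 / (α * u * log u)) (Ioc x lam)) :
    exp (-∫ u in x..lam, F u) / log x⁻¹ ^ (1 / α) =
      exp (-(∫ u in x..lam, (F u - 1 / (α * u * log u))) - 1 / α * log (log (1 / lam))) := by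
  have hlog : 0 < log x⁻¹ := log_pos ((one_lt_inv₀ hx).2 (hxlam.trans_lt hlam))
  rw [integral_eq_integral_sub_one_div_mul_log_add α hx hxlam hlam hF, rpow_def_of_pos hlog,
    ← exp_sub, one_div lam, log_inv lam, log_inv x, log_neg_eq_log, log_neg_eq_log]
  congr 1
  ring

theorem G_asymptotics_general (Ψ : ℝ → ℝ)
    (lam : ℝ) (hlam : 0 < lam) (hlam1 : lam < 1)
    (α : ℝ)
    (hint : IntegrableOn (fun u => 1 / Ψ u - 1 / (α * u * Real.log u))
      (Set.Ioc 0 lam))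
    (G : ℝ → ℝ) (hG : ∀ y : ℝ, G y = Real.exp (-(∫ u in y..lam, 1 / Ψ u))) :
    Tendsto (fun y : ℝ => G (1 / y) / (Real.log y) ^ ((1:ℝ) / α)) atTop
      (nhds (Real.exp
        (-(∫ u in Set.Ioc (0:ℝ) lam, (1 / Ψ u - 1 / (α * u * Real.log u)))
          - (1 / α) * Real.log (Real.log (1 / lam))))) := by
  have hlim : Tendsto (fun x => G x / log x⁻¹ ^ (1 / α)) (𝓝[>] 0)
      (𝓝 (exp (-(∫ u in Ioc (0:ℝ) lam, (1 / Ψ u - 1 / (α * u * log u)))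
        - 1 / α * log (log (1 / lam))))) := by
    refine (((tendsto_intervalIntegral_nhdsGT_of_integrableOn_Ioc hlam hint).neg.sub_const
      _).rexp).congr' ?_
    filter_upwards [Ioo_mem_nhdsGT hlam] with x hx
    rw [hG, exp_neg_integral_div_rpow_log_inv α hx.1 hx.2.le hlam1
      (hint.mono_set (Ioc_subset_Ioc_left hx.1.le))]
  simpa only [Function.comp_def, inv_inv, one_div] using hlim.comp tendsto_inv_atTop_nhdsGT_zero

/-- If `Ψ` has infinite mean (`Ψ(u)/u → -∞` at `0+`), `∫_{0+} du/Ψ = -∞`, and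
`1/Ψ(u) - 1/(α u log u)` is integrable near `0`, then
`G(1/y) ~ k_λ (log y)^{1/α}` as `y → ∞`, with the explicit constant
`k_λ = exp(-∫_0^λ (1/Ψ(u) - 1/(α u log u)) du - (1/α) log log(1/λ))`. -/
theorem G_asymptotics (Ψ : ℝ → ℝ)
    (hcont : ContinuousOn Ψ (Set.Ioi 0))
    (hneg : ∀ u : ℝ, 0 < u → u < 1 → Ψ u < 0)
    (hmean : Tendsto (fun u => Ψ u / u) (nhdsWithin 0 (Set.Ioi 0)) atBot)
    (lam : ℝ) (hlam : 0 < lam) (hlam1 : lam < 1)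
    (α : ℝ) (hα : 0 < α)
    (hzero : Tendsto (fun a => ∫ u in a..lam, 1 / Ψ u)
      (nhdsWithin 0 (Set.Ioi 0)) atBot)
    (hint : IntegrableOn (fun u => 1 / Ψ u - 1 / (α * u * Real.log u))
      (Set.Ioc 0 lam))
    (G : ℝ → ℝ) (hG : ∀ y : ℝ, G y = Real.exp (-(∫ u in y..lam, 1 / Ψ u))) :
    Tendsto (fun y : ℝ => G (1 / y) / (Real.log y) ^ ((1:ℝ) / α)) atTop
      (nhds (Real.exp
        (-(∫ u in Set.Ioc (0:ℝ) lam, (1 / Ψ u - 1 / (α * u * Real.log u)))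
          - (1 / α) * Real.log (Real.log (1 / lam))))) :=
  G_asymptotics_general Ψ lam hlam hlam1 α hint G hG
end

section
/- Let Ψ : (0,∞) → (0,∞) be continuous positive with ∫^∞ du/Ψ(u) < +∞ (non-persistence), and let (v̄_t)_{t>0} be the unique solution of dv̄_t/dt = -Ψ(v̄_t) with v̄_t → +∞ as t → 0+, i.e. ∫_{v̄_t}^{∞} du/Ψ(u) = t. Let ξ_x := inf{t ≥ 0 : X_t(x) = 0} where P(X_t(x) = 0) = exp(-x·v̄_t). Then (ξ_x)_{x≥0} is such that Z(x) := ξ_x satisfies: Z is an extremal-F process with F(z) = exp(-v̄_z), provided ξ_{x+y} = max(ξ_x, ξ'_y) with ξ'_y independent of (ξ_u, u ≤ x) and distributed as ξ_y. -/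
/-!
Peel off the last point. By the max-increment property, `ξ (x (m+1)) = max (ξ (x m)) ξ'` a.s.
with `ξ'` independent of `σ(ξ u, u ≤ x m)` and distributed as `ξ (x (m+1) - x m)`. So the event
`{ξ (x i) ≤ z i, i ≤ m + 1}` is `{ξ (x i) ≤ z' i, i ≤ m} ∩ {ξ' ≤ z (m+1)}` up to a null set, where
`z'` lowers `z m` to `min (z m) (z (m+1))`. Independence splits its probability, and iterating
replaces each threshold `z i` by the running minimum `min_{j ≥ i} z j`, which is the
finite-dimensional law of an extremal-`F` process.
-/

open MeasureTheory ProbabilityTheory Real Filter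

section RunningMinimum

theorem forall_lt_add_two_le_iff_update_min {α : Type*} [LinearOrder α] {a z : ℕ → α} {b : α}
    {m : ℕ} (h : a (m + 1) = max (a m) b) :
    (∀ i < m + 2, a i ≤ z i) ↔
      (∀ i < m + 1, a i ≤ Function.update z m (min (z m) (z (m + 1))) i) ∧ b ≤ z (m + 1) := by
  simp only [Function.update_apply]
  constructor
  · intro hle
    have hlast := hle (m + 1) (by omega)
    rw [h, max_le_iff] at hlast
    refine ⟨fun i hi => ?_, hlast.2⟩
    split_ifs with him
    · subst him
      exact le_min (hle i (by omega)) hlast.1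
    · exact hle i (by omega)
  · rintro ⟨hle, hb⟩ i hi
    have hm := hle m (by omega)
    rw [if_pos rfl, le_min_iff] at hm
    rcases (show i < m ∨ i = m ∨ i = m + 1 by omega) with hi | rfl | rfl
    · simpa [hi.ne] using hle i (by omega)
    · exact hm.1
    · exact h ▸ max_le hm.2 hb

variable {α : Type*} [ConditionallyCompleteLinearOrder α]

theorem sInf_image_Ico_add_one_self (f : ℕ → α) (n : ℕ) :
    sInf (f '' Set.Ico n (n + 1)) = f n := by
  rw [Set.Ico_add_one_right_eq_Icc, Set.Icc_self, Set.image_singleton, csInf_singleton]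

theorem sInf_image_Ico_add_one (f : ℕ → α) {i n : ℕ} (h : i < n) :
    sInf (f '' Set.Ico i (n + 1)) = min (f n) (sInf (f '' Set.Ico i n)) := by
  have : Nonempty α := ⟨f n⟩
  rw [Set.Ico_add_one_right_eq_Icc, ← Set.Ico_insert_right h.le, Set.image_insert_eq,
    csInf_insert ((Set.finite_Ico i n).image f).bddBelow ((Set.nonempty_Ico.2 h).image f)]

theorem sInf_image_Ico_update_min (z : ℕ → α) {i m : ℕ} (hi : i ≤ m) :
    sInf (Function.update z m (min (z m) (z (m + 1))) '' Set.Ico i (m + 1)) =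
      sInf (z '' Set.Ico i (m + 2)) := by
  rcases hi.eq_or_lt with rfl | hlt
  · rw [sInf_image_Ico_add_one_self, Function.update_self, sInf_image_Ico_add_one z i.lt_add_one,
      sInf_image_Ico_add_one_self, min_comm]
  · have hz : Function.update z m (min (z m) (z (m + 1))) '' Set.Ico i m = z '' Set.Ico i m :=
      Set.image_congr fun j hj => Function.update_of_ne hj.2.ne _ _
    rw [sInf_image_Ico_add_one _ hlt, hz, Function.update_self,
      sInf_image_Ico_add_one z (hlt.trans m.lt_add_one), sInf_image_Ico_add_one z hlt,
      min_assoc, min_left_comm]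

theorem prod_range_sInf_image_Ico_update_min {M : Type*} [CommMonoid M] (g : ℕ → α → M)
    (z : ℕ → α) (m : ℕ) :
    ∏ i ∈ Finset.range (m + 2), g i (sInf (z '' Set.Ico i (m + 2))) =
      (∏ i ∈ Finset.range (m + 1),
        g i (sInf (Function.update z m (min (z m) (z (m + 1))) '' Set.Ico i (m + 1)))) *
        g (m + 1) (z (m + 1)) := by
  rw [Finset.prod_range_succ, sInf_image_Ico_add_one_self]
  congr 1
  refine Finset.prod_congr rfl fun i hi => ?_
  rw [sInf_image_Ico_update_min z (Nat.lt_add_one_iff.1 (Finset.mem_range.1 hi))]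

end RunningMinimum

section MaxIncrements

variable {Ω : Type*}

abbrev pastSigma (ξ : ℝ → Ω → ℝ) (x : ℝ) : MeasurableSpace Ω :=
  ⨆ u ∈ Set.Icc (0:ℝ) x, MeasurableSpace.comap (ξ u) inferInstance

theorem measurableSet_pastSigma_le {ξ : ℝ → Ω → ℝ} {x u : ℝ} (hu : u ∈ Set.Icc 0 x) (c : ℝ) :
    MeasurableSet[pastSigma ξ x] {ω | ξ u ω ≤ c} :=
  le_biSup (fun u => MeasurableSpace.comap (ξ u) inferInstance) hu _
    ⟨Set.Iic c, measurableSet_Iic, rfl⟩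

variable [MeasurableSpace Ω]

def HasIndepMaxIncrements (P : Measure Ω) (ξ : ℝ → Ω → ℝ) : Prop :=
  ∀ x y : ℝ, 0 ≤ x → 0 ≤ y → ∃ ξ' : Ω → ℝ, Measurable ξ' ∧
    Indep (MeasurableSpace.comap ξ' inferInstance) (pastSigma ξ x) P ∧
    Measure.map ξ' P = Measure.map (ξ y) P ∧ ∀ᵐ ω ∂P, ξ (x + y) ω = max (ξ x ω) (ξ' ω)

theorem measure_iInter_le_add_two {P : Measure Ω} {ξ : ℝ → Ω → ℝ}
    (hmeas : ∀ x, Measurable (ξ x)) (hξ : HasIndepMaxIncrements P ξ) {m : ℕ} {x : ℕ → ℝ}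
    (hx : ∀ i ≤ m, x i ∈ Set.Icc 0 (x m)) (hxm : x m ≤ x (m + 1)) (z : ℕ → ℝ) :
    P (⋂ i ∈ Finset.range (m + 2), {ω | ξ (x i) ω ≤ z i}) =
      P (⋂ i ∈ Finset.range (m + 1),
          {ω | ξ (x i) ω ≤ Function.update z m (min (z m) (z (m + 1))) i}) *
        P {ω | ξ (x (m + 1) - x m) ω ≤ z (m + 1)} := by
  obtain ⟨ξ', hξ', hindep, hlaw, hmax⟩ :=
    hξ (x m) (x (m + 1) - x m) (hx m le_rfl).1 (sub_nonneg.2 hxm)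
  set S := ⋂ i ∈ Finset.range (m + 1),
    {ω | ξ (x i) ω ≤ Function.update z m (min (z m) (z (m + 1))) i}
  have hS : MeasurableSet[pastSigma ξ (x m)] S :=
    (Finset.range (m + 1)).finite_toSet.measurableSet_biInter fun i hi =>
      measurableSet_pastSigma_le (hx i (Nat.lt_add_one_iff.1 (Finset.mem_range.1 hi))) _
  have hevent : (⋂ i ∈ Finset.range (m + 2), {ω | ξ (x i) ω ≤ z i}) =ᵐ[P]
      (S ∩ {ω | ξ' ω ≤ z (m + 1)} : Set Ω) := by
    rw [eventuallyEq_set]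
    filter_upwards [hmax] with ω hω
    rw [add_sub_cancel] at hω
    simp only [S, Set.mem_inter_iff, Set.mem_iInter, Finset.mem_range, Set.mem_ofPred_eq]
    exact forall_lt_add_two_le_iff_update_min (a := fun i => ξ (x i) ω) hω
  rw [measure_congr hevent, Set.inter_comm,
    (Indep_iff _ _ P).1 hindep {ω | ξ' ω ≤ z (m + 1)} S ⟨Set.Iic _, measurableSet_Iic, rfl⟩ hS,
    mul_comm]
  exact congrArg (P S * ·) <| (IdentDistrib.mk hξ'.aemeasurable (hmeas _).aemeasurable hlaw)
    |>.measure_mem_eq measurableSet_Iic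

end MaxIncrements

theorem extinction_times_extremal_general {Ω : Type*} [MeasurableSpace Ω]
    (P : Measure Ω) [IsProbabilityMeasure P]
    (vbar : ℝ → ℝ)
    (ξ : ℝ → Ω → ℝ) (hmeas : ∀ x : ℝ, Measurable (ξ x))
    (hlaw : ∀ x : ℝ, 0 ≤ x → ∀ z : ℝ, 0 < z →
      P {ω | ξ x ω ≤ z} = ENNReal.ofReal (Real.exp (-(x * vbar z))))
    (hmax : ∀ x y : ℝ, 0 ≤ x → 0 ≤ y → ∃ ξ' : Ω → ℝ, Measurable ξ' ∧
      Indep (MeasurableSpace.comap ξ' (inferInstance : MeasurableSpace ℝ))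
        (⨆ u ∈ Set.Icc (0:ℝ) x,
          MeasurableSpace.comap (ξ u) (inferInstance : MeasurableSpace ℝ)) P ∧
      Measure.map ξ' P = Measure.map (ξ y) P ∧
      (∀ᵐ ω ∂P, ξ (x + y) ω = max (ξ x ω) (ξ' ω))) :
    ∀ (n : ℕ) (x z : ℕ → ℝ), (∀ i, i < n → 0 ≤ x i) →
      (∀ i j, i ≤ j → j < n → x i ≤ x j) → (∀ i, i < n → 0 < z i) →
      P (⋂ i ∈ Finset.range n, {ω | ξ (x i) ω ≤ z i}) =
        ENNReal.ofReal (∏ i ∈ Finset.range n,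
          Real.exp (-(x i - if i = 0 then 0 else x (i - 1)) *
            vbar (sInf (z '' Set.Ico i n)))) := by
  intro n x
  induction n with
  | zero => intro z _ _ _; simp
  | succ n ih =>
    intro z hx hmono hz
    rcases n with _ | m
    · simp [sInf_image_Ico_add_one_self, hlaw (x 0) (hx 0 one_pos) (z 0) (hz 0 one_pos)]
    · have hz' : ∀ i < m + 1, 0 < Function.update z m (min (z m) (z (m + 1))) i := by
        intro i hi
        simp only [Function.update_apply]
        split_ifs
        · exact lt_min (hz m (by omega)) (hz (m + 1) (by omega))
        · exact hz i (by omega)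
      have hxm : x m ≤ x (m + 1) := hmono m (m + 1) m.le_succ (by omega)
      rw [measure_iInter_le_add_two hmeas hmax
          (fun i hi => ⟨hx i (by omega), hmono i m hi (by omega)⟩) hxm,
        ih _ (fun i hi => hx i (by omega)) (fun i j hij hj => hmono i j hij (by omega)) hz',
        hlaw _ (sub_nonneg.2 hxm) _ (hz (m + 1) (by omega)),
        ← ENNReal.ofReal_mul (by positivity),
        prod_range_sInf_image_Ico_update_min
          (fun i t => Real.exp (-(x i - if i = 0 then 0 else x (i - 1)) * vbar t))]
      simp only [m.succ_ne_zero, if_false, Nat.add_sub_cancel, neg_mul]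

/-- Extinction times of a flow of subcritical non-persistent CSBPs form an
extremal-`F` process with `F(z) = exp(-v̄_z)`, where `v̄` solves
`∫_{v̄_t}^∞ du/Ψ(u) = t` and `P(ξ_x ≤ z) = exp(-x v̄_z)`, provided
`ξ_{x+y} = max(ξ_x, ξ'_y)` with `ξ'_y` independent of the past and distributed
as `ξ_y`. -/
theorem extinction_times_extremal {Ω : Type*} [MeasurableSpace Ω]
    (P : Measure Ω) [IsProbabilityMeasure P]
    (Ψ : ℝ → ℝ) (hcont : ContinuousOn Ψ (Set.Ioi 0))
    (hpos : ∀ u : ℝ, 0 < u → 0 < Ψ u)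
    (hfin : IntegrableOn (fun u => 1 / Ψ u) (Set.Ioi 1))
    (vbar : ℝ → ℝ)
    (hvbar : ∀ t : ℝ, 0 < t → 0 < vbar t ∧
      (∫ u in Set.Ioi (vbar t), 1 / Ψ u) = t)
    (ξ : ℝ → Ω → ℝ) (hmeas : ∀ x : ℝ, Measurable (ξ x))
    (hlaw : ∀ x : ℝ, 0 ≤ x → ∀ z : ℝ, 0 < z →
      P {ω | ξ x ω ≤ z} = ENNReal.ofReal (Real.exp (-(x * vbar z))))
    (hmax : ∀ x y : ℝ, 0 ≤ x → 0 ≤ y → ∃ ξ' : Ω → ℝ, Measurable ξ' ∧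
      Indep (MeasurableSpace.comap ξ' (inferInstance : MeasurableSpace ℝ))
        (⨆ u ∈ Set.Icc (0:ℝ) x,
          MeasurableSpace.comap (ξ u) (inferInstance : MeasurableSpace ℝ)) P ∧
      Measure.map ξ' P = Measure.map (ξ y) P ∧
      (∀ᵐ ω ∂P, ξ (x + y) ω = max (ξ x ω) (ξ' ω))) :
    ∀ (n : ℕ) (x z : ℕ → ℝ), (∀ i, i < n → 0 ≤ x i) →
      (∀ i j, i ≤ j → j < n → x i ≤ x j) → (∀ i, i < n → 0 < z i) →
      P (⋂ i ∈ Finset.range n, {ω | ξ (x i) ω ≤ z i}) =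
        ENNReal.ofReal (∏ i ∈ Finset.range n,
          Real.exp (-(x i - if i = 0 then 0 else x (i - 1)) *
            vbar (sInf (z '' Set.Ico i n)))) :=
  extinction_times_extremal_general P vbar ξ hmeas hlaw hmax
end
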